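/- arXiv:2501.10126 — 2 statements merged into one kernel-verified Lean document; each statement's English description precedes it below -/
import Mathlib

section
/- Let f be a parameterization of a tree template 𝒫 and s a state. Substituting the values of f for the variables δ̂_n, β_n in the selection formulas makes φ^sel_{s,n} true for exactly one leaf n of the tree, namely n = leaf_{𝒫(f)}(s), i.e., φ^sel_{s,n}(f) holds if and only if s ∈ states_{𝒫(f)}(n). -/
namespace Paper5

/-- A decision tree for an MDP whose states are valuations of the variables in `Var`:
leaves carry actions from `A`, inner nodes carry a state predicate `v ≤ b`
(a variable `v : Var` together with an integer bound `b`); the left subtree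
corresponds to states satisfying the predicate, the right subtree to the others. -/
inductive DT (Var A : Type) : Type
  | leaf (a : A)
  | node (v : Var) (b : ℤ) (l r : DT Var A)

variable {Var A : Type}

/-- Evaluation of a decision tree on a state (valuation): follow the predicates
from the root to a leaf and return the leaf's action. -/
def DT.eval : DT Var A → (Var → ℤ) → A
  | .leaf a, _ => a
  | .node v b l r, s => if s v ≤ b then l.eval s else r.eval s

/-- Depth of a decision tree. -/
def DT.depth : DT Var A → ℕ
  | .leaf _ => 0
  | .node _ _ l r => max l.depth r.depth + 1

/-- `t.IsLeafAt π` holds iff the path `π` (list of booleans; `true` = go left)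
leads from the root of `t` to a leaf. -/
def DT.IsLeafAt : DT Var A → List Bool → Prop
  | .leaf _, [] => True
  | .node _ _ l _, true :: p => l.IsLeafAt p
  | .node _ _ _ r, false :: p => r.IsLeafAt p
  | _, _ => False

/-- The set of states (within the state space `X`) corresponding to the node of the
tree reached by path `π`: the root corresponds to all of `X`, the left child of a node
to the states of the node satisfying its predicate, and the right child to those
not satisfying it.  Invalid paths correspond to `∅`. -/
def DT.statesAt : DT Var A → Set (Var → ℤ) → List Bool → Set (Var → ℤ)
  | _, X, [] => X
  | .node v b l _, X, true :: p => l.statesAt {s ∈ X | s v ≤ b} p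
  | .node v b _ r, X, false :: p => r.statesAt {s ∈ X | ¬ s v ≤ b} p
  | .leaf _, _, _ :: _ => ∅

open Classical in
/-- The policy induced by a decision tree: play the action of the leaf the state is
routed to if it is available (`Av s` is the set of available actions in state `s`),
and otherwise fall back to the random action `astar`. -/
noncomputable def inducedPolicy (Av : (Var → ℤ) → Set A) (astar : A)
    (t : DT Var A) (s : Var → ℤ) : A :=
  if t.eval s ∈ Av s then t.eval s else astar

/-- The skeleton (topology) of a binary tree: the underlying tree `T` of a tree
template, forgetting all labels. -/
inductive Skel : Type
  | leaf
  | node (l r : Skel)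

/-- `sk.IsInnerAt π` holds iff the path `π` (`true` = left) leads from the root
to an inner node of the skeleton. -/
def Skel.IsInnerAt : Skel → List Bool → Prop
  | .node _ _, [] => True
  | .node l _, true :: p => l.IsInnerAt p
  | .node _ r, false :: p => r.IsInnerAt p
  | _, _ => False

/-- `sk.IsLeafAt π` holds iff the path `π` leads from the root to a leaf
of the skeleton. -/
def Skel.IsLeafAt : Skel → List Bool → Prop
  | .leaf, [] => True
  | .node l _, true :: p => l.IsLeafAt p
  | .node _ r, false :: p => r.IsLeafAt p
  | _, _ => False

/-- A parameterization `f = (δ̂, β, α̂)` of a tree template: a variable-selection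
function, a bound-selection function (on inner nodes, addressed by root-to-node
paths) and an action-selection function (on leaves). -/
structure Param (Var A : Type) where
  dvar : List Bool → Var
  bound : List Bool → ℤ
  act : List Bool → A

/-- The decision tree `𝒫(f)` instantiated from the skeleton by the
parameterization `f`: the inner node at address `p` carries the predicate
`v_{δ̂(p)} ≤ β(p)`, the leaf at address `p` carries the action `α̂(p)`. -/
def Skel.build : Skel → Param Var A → List Bool → DT Var A
  | .leaf, f, p => .leaf (f.act p)
  | .node l r, f, p =>
      .node (f.dvar p) (f.bound p) (l.build f (p ++ [true])) (r.build f (p ++ [false]))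

/-- A rectangular set of parameterizations `F`: for each inner node a set of allowed
variables and a set of allowed bounds, and for each leaf a set of allowed actions. -/
structure FamSet (Var A : Type) where
  dvarS : List Bool → Set Var
  boundS : List Bool → Set ℤ
  actS : List Bool → Set A

/-- `f ∈ F`: the parameterization `f` belongs to the rectangular set `F`
(equivalently, `f` satisfies the formula `dom(F)`). -/
def memF (sk : Skel) (F : FamSet Var A) (f : Param Var A) : Prop :=
  (∀ p, sk.IsInnerAt p → f.dvar p ∈ F.dvarS p ∧ f.bound p ∈ F.boundS p) ∧
  (∀ p, sk.IsLeafAt p → f.act p ∈ F.actS p)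

/-- For a root-to-node path, the list of (proper prefix, direction taken) pairs:
the inner nodes visited along the path together with the direction in which
the path continues. -/
def pathSteps : List Bool → List (List Bool × Bool)
  | [] => []
  | d :: p => ([], d) :: (pathSteps p).map fun q => (d :: q.1, q.2)

/-- The relation `▷` used in the selection formula: `≤` when the path goes left,
`>` when it goes right. -/
def dirRel : Bool → ℤ → ℤ → Prop
  | true, x, b => x ≤ b
  | false, x, b => x > b

/-- The selection formula `φ^sel_{s,n}` (with the parameterization `f` substituted
for the variables `δ̂_n, β_n`): state `s` is routed along the path `n`, i.e. at every
inner node on the path the value of the selected variable satisfies the required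
inequality. -/
def phiSel (f : Param Var A) (s : Var → ℤ) (n : List Bool) : Prop :=
  ∀ q ∈ pathSteps n, dirRel q.2 (s (f.dvar q.1)) (f.bound q.1)

/-- The action-choice formula `φ^act_{s,a,n}` (with `f` substituted): the leaf `n`
selects action `a`; for the random action `a = α*` the leaf may also select any
action unavailable in `s`. -/
def phiActAt (Av : (Var → ℤ) → Set A) (astar : A) (f : Param Var A)
    (s : Var → ℤ) (a : A) (n : List Bool) : Prop :=
  (a = astar ∧ (f.act n = astar ∨ f.act n ∉ Av s)) ∨ (a ≠ astar ∧ f.act n = a)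

/-- The action-choice formula `φ^act_{s,a}` (with `f` substituted): every leaf to
which `s` is routed selects action `a` in the sense of `φ^act_{s,a,n}`. -/
def phiAct (sk : Skel) (Av : (Var → ℤ) → Set A) (astar : A) (f : Param Var A)
    (s : Var → ℤ) (a : A) : Prop :=
  ∀ n, sk.IsLeafAt n → phiSel f s n → phiActAt Av astar f s a n

/-! Both sides unfold along the path in the same way: at an inner node, `φ^sel` for the path
`d :: m` is the test of the root in direction `d` together with `φ^sel` for `m` in the
subtree, whose parameterization is `f` shifted by `[d]`; `statesAt` adds the same test to the
state set. Induction on the skeleton gives the equivalence, and since every integer satisfies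
exactly one of `≤ b`, `> b`, exactly one leaf is selected. -/

def Param.shift (f : Param Var A) (p : List Bool) : Param Var A :=
  ⟨fun q => f.dvar (p ++ q), fun q => f.bound (p ++ q), fun q => f.act (p ++ q)⟩

theorem Skel.build_append (sk : Skel) (f : Param Var A) (p q : List Bool) :
    sk.build f (p ++ q) = sk.build (f.shift p) q := by
  induction sk generalizing q with
  | leaf => rfl
  | node l r ihl ihr =>
    simp only [Skel.build, List.append_assoc, ihl, ihr]
    rfl

theorem Skel.build_node_nil (l r : Skel) (f : Param Var A) :
    (Skel.node l r).build f [] =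
      .node (f.dvar []) (f.bound [])
        (l.build (f.shift [true]) []) (r.build (f.shift [false]) []) := by
  simp only [Skel.build, ← Skel.build_append, List.nil_append, List.append_nil]

theorem phiSel_nil (f : Param Var A) (s : Var → ℤ) : phiSel f s [] := by
  simp [phiSel, pathSteps]

theorem phiSel_cons {f : Param Var A} {s : Var → ℤ} {d : Bool} {m : List Bool} :
    phiSel f s (d :: m) ↔
      dirRel d (s (f.dvar [])) (f.bound []) ∧ phiSel (f.shift [d]) s m := by
  simp only [phiSel, pathSteps, List.forall_mem_cons, List.forall_mem_map]
  rfl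

theorem dirRel_unique {d d' : Bool} {x b : ℤ} (h : dirRel d x b) (h' : dirRel d' x b) :
    d = d' := by
  cases d <;> cases d' <;> first | rfl | (simp only [dirRel] at h h'; omega)

theorem mem_statesAt_build_iff (sk : Skel) (f : Param Var A) (s : Var → ℤ)
    (X : Set (Var → ℤ)) {n : List Bool} (hn : sk.IsLeafAt n) :
    s ∈ (sk.build f []).statesAt X n ↔ s ∈ X ∧ phiSel f s n := by
  induction sk generalizing f X n with
  | leaf =>
    rcases n with _ | ⟨d, m⟩
    · simp [Skel.build, DT.statesAt, phiSel_nil]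
    · cases d <;> exact hn.elim
  | node l r ihl ihr =>
    rcases n with _ | ⟨_ | _, m⟩
    · exact hn.elim
    · rw [Skel.build_node_nil, DT.statesAt, ihr _ _ hn, phiSel_cons]
      simp [dirRel, and_assoc]
    · rw [Skel.build_node_nil, DT.statesAt, ihl _ _ hn, phiSel_cons]
      simp [dirRel, and_assoc]

theorem exists_isLeafAt_phiSel (sk : Skel) (f : Param Var A) (s : Var → ℤ) :
    ∃ n, sk.IsLeafAt n ∧ phiSel f s n := by
  induction sk generalizing f with
  | leaf => exact ⟨[], trivial, phiSel_nil f s⟩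
  | node l r ihl ihr =>
    by_cases h : s (f.dvar []) ≤ f.bound []
    · obtain ⟨m, hm, hsel⟩ := ihl (f.shift [true])
      exact ⟨true :: m, hm, phiSel_cons.2 ⟨h, hsel⟩⟩
    · obtain ⟨m, hm, hsel⟩ := ihr (f.shift [false])
      exact ⟨false :: m, hm, phiSel_cons.2 ⟨not_le.1 h, hsel⟩⟩

theorem eq_of_isLeafAt_of_phiSel (sk : Skel) (f : Param Var A) (s : Var → ℤ)
    {n n' : List Bool} (hn : sk.IsLeafAt n) (hn' : sk.IsLeafAt n')
    (h : phiSel f s n) (h' : phiSel f s n') : n = n' := by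
  induction sk generalizing f n n' with
  | leaf =>
    rcases n with _ | ⟨_ | _, _⟩ <;> rcases n' with _ | ⟨_ | _, _⟩ <;>
      first | rfl | exact hn.elim | exact hn'.elim
  | node l r ihl ihr =>
    rcases n with _ | ⟨d, m⟩
    · exact hn.elim
    rcases n' with _ | ⟨d', m'⟩
    · exact hn'.elim
    obtain ⟨hd, hm⟩ := phiSel_cons.1 h
    obtain ⟨hd', hm'⟩ := phiSel_cons.1 h'
    obtain rfl := dirRel_unique hd hd'
    cases d
    · rw [ihr _ hn hn' hm hm']
    · rw [ihl _ hn hn' hm hm']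

/-- Substituting the values of a parameterization `f` into the
selection formulas makes `φ^sel_{s,n}` true for exactly one leaf `n` of the tree,
namely the leaf whose corresponding state set in `𝒫(f)` contains `s`:
`φ^sel_{s,n}(f)` holds iff `s ∈ states_{𝒫(f)}(n)`. -/
theorem phiSel_iff_mem_statesAt {Var A : Type}
    (sk : Skel) (f : Param Var A) (s : Var → ℤ) :
    (∀ n : List Bool, sk.IsLeafAt n →
      (phiSel f s n ↔ s ∈ (sk.build f []).statesAt Set.univ n)) ∧
    (∃! n : List Bool, sk.IsLeafAt n ∧ phiSel f s n) := by
  refine ⟨fun n hn => ?_, ?_⟩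
  · rw [mem_statesAt_build_iff sk f s _ hn, and_iff_right (Set.mem_univ s)]
  · obtain ⟨n, hn⟩ := exists_isLeafAt_phiSel sk f s
    exact ⟨n, hn, fun n' hn' => eq_of_isLeafAt_of_phiSel sk f s hn'.1 hn.1 hn'.2 hn.2⟩

end Paper5
end

section
/- Let (U, T) be an instance of Exact Cover by 3-Sets with U = {1,…,n}, n = 3q, n > 7, and T = {T_1,…,T_j}, each T_i ⊆ U with |T_i| = 3. Construct the MDP M with states S = {1,…,n} ∪ {⊥, n+1, n+2, n+3, n+4}, initial state 1, actions Act = {1,…,n+3}, and transitions P(s, a, s+1) = 1 if a = s and P(s, a, ⊥) = 1 otherwise, for all s, a ∈ {1,…,n+3}, where ⊥ and n+4 are absorbing and the goal set is {n+4}. The state variables are Var = T ∪ S with, for each state s, s(T_i) = 1 if s ∈ T_i and s(T_i) = 0 otherwise, and s(v) = 1 if s = v and s(v) = 0 otherwise for v ∈ S. Then there exists a decision tree of depth at most k = n/3 + 2 whose induced policy reaches n+4 from the initial state with probability greater than 1/2 if and only if (U, T) has an exact cover. -/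
namespace Paper11

open scoped NNReal

variable {S : Type} [Fintype S] [DecidableEq S]

/-- Probability of reaching the goal set `G` within `n` steps in the Markov chain
with transition matrix `T`. -/
def reachAux (T : S → S → ℝ≥0) (G : Finset S) : ℕ → S → ℝ≥0
  | 0, s => if s ∈ G then 1 else 0
  | n + 1, s => if s ∈ G then 1 else ∑ s', T s s' * reachAux T G n s'

/-- Probability of reaching the goal set `G` from state `s` in the Markov chain
with transition matrix `T`. -/
noncomputable def reachProb (T : S → S → ℝ≥0) (G : Finset S) (s : S) : ℝ≥0 :=
  ⨆ n, reachAux T G n s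

/-- A decision tree for an MDP whose states are valuations of the variables in `Var`:
leaves carry actions from `A`, inner nodes carry a state predicate `v ≤ b`
(a variable `v : Var` together with an integer bound `b`); the left subtree
corresponds to states satisfying the predicate, the right subtree to the others. -/
inductive DT (Var A : Type) : Type
  | leaf (a : A)
  | node (v : Var) (b : ℤ) (l r : DT Var A)

variable {Var A : Type}

/-- Evaluation of a decision tree on a state (valuation): follow the predicates
from the root to a leaf and return the leaf's action. -/
def DT.eval : DT Var A → (Var → ℤ) → A
  | .leaf a, _ => a
  | .node v b l r, s => if s v ≤ b then l.eval s else r.eval s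

/-- Depth of a decision tree. -/
def DT.depth : DT Var A → ℕ
  | .leaf _ => 0
  | .node _ _ l r => max l.depth r.depth + 1

/-- `t.IsLeafAt π` holds iff the path `π` (list of booleans; `true` = go left)
leads from the root of `t` to a leaf. -/
def DT.IsLeafAt : DT Var A → List Bool → Prop
  | .leaf _, [] => True
  | .node _ _ l _, true :: p => l.IsLeafAt p
  | .node _ _ _ r, false :: p => r.IsLeafAt p
  | _, _ => False

/-- The set of states (within the state space `X`) corresponding to the node of the
tree reached by path `π`: the root corresponds to all of `X`, the left child of a node
to the states of the node satisfying its predicate, and the right child to those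
not satisfying it.  Invalid paths correspond to `∅`. -/
def DT.statesAt : DT Var A → Set (Var → ℤ) → List Bool → Set (Var → ℤ)
  | _, X, [] => X
  | .node v b l _, X, true :: p => l.statesAt {s ∈ X | s v ≤ b} p
  | .node v b _ r, X, false :: p => r.statesAt {s ∈ X | ¬ s v ≤ b} p
  | .leaf _, _, _ :: _ => ∅

section X3C

variable (n j : ℕ) (Tf : Fin j → Finset (Fin n))

/-- States of the MDP constructed from an X3C instance: the indices `0, …, n + 2`
represent the paper's states `1, …, n + 3`, index `n + 3` represents the goal state
`n + 4`, and index `n + 4` represents the sink state `⊥`. -/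
abbrev St := Fin (n + 5)

/-- Actions `1, …, n + 3` of the constructed MDP. -/
abbrev Ac := Fin (n + 3)

/-- The goal state `n + 4`. -/
def goalSt : St n := ⟨n + 3, by omega⟩

/-- The sink state `⊥`. -/
def botSt : St n := ⟨n + 4, by omega⟩

/-- The initial state `1`. -/
def initSt : St n := ⟨0, by omega⟩

/-- The (deterministic) successor under policy `σ`: in each non-absorbing state `s`,
the unique action `a = s` progresses to `s + 1` while every other action leads to the
sink `⊥`; the goal state and the sink are absorbing. -/
def stepSt (σ : St n → Ac n) (s : St n) : St n :=
  if h : (s : ℕ) < n + 3 then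
    (if ((σ s) : ℕ) = (s : ℕ) then ⟨(s : ℕ) + 1, by omega⟩ else botSt n)
  else s

/-- The transition matrix of the Markov chain induced by policy `σ` (all transitions
of the constructed MDP are Dirac distributions). -/
def transMat (σ : St n → Ac n) (s s' : St n) : ℝ≥0 :=
  if s' = stepSt n σ s then 1 else 0

/-- The state variables: a variable for each set `T_i` of the collection (valued `1`
exactly on the states corresponding to elements of `T_i`) and a variable for each
state (valued `1` exactly on that state). -/
def valu (s : St n) : Fin j ⊕ St n → ℤ
  | Sum.inl i => if h : (s : ℕ) < n then (if (⟨(s : ℕ), h⟩ : Fin n) ∈ Tf i then 1 else 0) else 0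
  | Sum.inr v => if s = v then 1 else 0

end X3C

/-! Under any policy the constructed MDP is deterministic, so the goal is reached with
probability `0` or `1`, and it is reached iff the policy plays action `s` in each of the
`n + 3` non-absorbing states `s`; the tree then has to send these states to different leaves.

If a tree does so, follow from the root the branch taken by states all of whose variables
on the way are `0`. At most one state reaches the end of that branch, and every other state
left it at a node `v ≤ b` where its value of `v` is nonzero: a set variable `T_i` only lets
elements of `T_i` leave, a state variable only that state. Depth `q + 2` allows at most
`q + 2` such nodes; the three states above `n` need two state variables and the end of the
branch, so `q` set variables must cover the `3q` elements, forcing an exact cover.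
Conversely an exact cover of size `q` gives a chain of `q` set tests, each followed by a
depth-two tree separating the three elements of its set. -/

section ExactCover

variable {α ι : Type*}

def IsExactCover (T : ι → Finset α) (I : Finset ι) : Prop :=
  ∀ u, ∃! i, i ∈ I ∧ u ∈ T i

open Finset

lemma IsExactCover.card_eq [Fintype α] [DecidableEq α] {T : ι → Finset α} {I : Finset ι}
    {k : ℕ} (hI : IsExactCover T I) (hT : ∀ i, #(T i) = k) :
    Fintype.card α = k * #I := by
  have hunion : I.biUnion T = univ :=
    eq_univ_of_forall fun u => mem_biUnion.2 (hI u).exists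
  have hdisj : (I : Set ι).PairwiseDisjoint T := fun i hi i' hi' hne =>
    disjoint_left.2 fun u hu hu' => hne ((hI u).unique ⟨hi, hu⟩ ⟨hi', hu'⟩)
  rw [← card_univ, ← hunion, card_biUnion hdisj, sum_const_nat fun i _ => hT i, mul_comm]

lemma isExactCover_of_cover [Fintype α] [DecidableEq α] {T : ι → Finset α} {I : Finset ι}
    {k : ℕ} (hT : ∀ i, #(T i) ≤ k) (hI : k * #I ≤ Fintype.card α)
    (hcov : ∀ u, ∃ i ∈ I, u ∈ T i) : IsExactCover T I := by
  classical
  intro u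
  obtain ⟨i, hi, hu⟩ := hcov u
  refine ⟨i, ⟨hi, hu⟩, fun i' ⟨hi', hu'⟩ => by_contra fun hne => ?_⟩
  -- Without `T i'`, the other sets still cover everything but `T i' \ {u}`.
  have hsub : univ ⊆ (T i').erase u ∪ (I.erase i').biUnion T := fun w _ => by
    obtain ⟨i'', hi'', hw⟩ := hcov w
    by_cases hwu : w = u
    · exact mem_union_right _
        (mem_biUnion.2 ⟨i, mem_erase.2 ⟨Ne.symm hne, hi⟩, hwu ▸ hu⟩)
    by_cases hi''i' : i'' = i'
    · exact mem_union_left _ (mem_erase.2 ⟨hwu, hi''i' ▸ hw⟩)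
    · exact mem_union_right _ (mem_biUnion.2 ⟨i'', mem_erase.2 ⟨hi''i', hi''⟩, hw⟩)
  have hcard := (card_le_card hsub).trans (card_union_le _ _)
  have herase : #((T i').erase u) + 1 ≤ k := by
    rw [card_erase_of_mem hu']; have := card_pos.2 ⟨u, hu'⟩; have := hT i'; omega
  have hrest := card_biUnion_le_card_mul (I.erase i') T k fun i _ => hT i
  have hI' : #(I.erase i') + 1 = #I := card_erase_add_one hi'
  rw [card_univ] at hcard
  nlinarith

end ExactCover

open Finset in
/-- Along the branch followed by valuations vanishing on every tested variable, each node
`v` lets go only states with `val s v ≠ 0`; at its end at most one state of `X` is left. -/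
theorem DT.exists_separating_vars {α : Type*} (t : DT Var A) (val : α → Var → ℤ)
    (X : Finset α) (hX : Set.InjOn (fun s => t.eval (val s)) X) :
    ∃ (V : Finset Var) (Z : Finset α), #V ≤ t.depth ∧ #Z ≤ 1 ∧
      ∀ s ∈ X, s ∈ Z ∨ ∃ v ∈ V, val s v ≠ 0 := by
  classical
  induction t generalizing X with
  | leaf a =>
    exact ⟨∅, X, le_rfl, card_le_one.2 fun s hs s' hs' => hX hs hs' rfl, fun s hs => .inl hs⟩
  | node v b l r ihl ihr =>
    obtain ⟨V, Z, hV, hZ, hcov⟩ : ∃ (V : Finset Var) (Z : Finset α),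
        #V ≤ max l.depth r.depth ∧ #Z ≤ 1 ∧
          ∀ s ∈ X, val s v = 0 → s ∈ Z ∨ ∃ w ∈ V, val s w ≠ 0 := by
      have hinj (c : DT Var A)
          (hc : ∀ s, val s v = 0 → (DT.node v b l r).eval (val s) = c.eval (val s)) :
          Set.InjOn (fun s => c.eval (val s)) ↑({s ∈ X | val s v = 0} : Finset α) :=
        fun s hs s' hs' h => by
        rw [mem_coe, mem_filter] at hs hs'
        exact hX hs.1 hs'.1 ((hc s hs.2).trans (h.trans (hc s' hs'.2).symm))
      by_cases hb : 0 ≤ b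
      · obtain ⟨V, Z, hV, hZ, hcov⟩ := ihl _ (hinj l fun s hs => by simp [DT.eval, hs, hb])
        exact ⟨V, Z, hV.trans (le_max_left _ _), hZ,
          fun s hs h => hcov s (mem_filter.2 ⟨hs, h⟩)⟩
      · obtain ⟨V, Z, hV, hZ, hcov⟩ := ihr _ (hinj r fun s hs => by simp [DT.eval, hs, hb])
        exact ⟨V, Z, hV.trans (le_max_right _ _), hZ,
          fun s hs h => hcov s (mem_filter.2 ⟨hs, h⟩)⟩
    refine ⟨insert v V, Z, (card_insert_le _ _).trans (by simp [DT.depth, hV]), hZ,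
      fun s hs => ?_⟩
    by_cases h : val s v = 0
    · rcases hcov s hs h with hZ | ⟨w, hw, hne⟩
      exacts [.inl hZ, .inr ⟨w, mem_insert_of_mem hw, hne⟩]
    · exact .inr ⟨v, mem_insert_self _ _, h⟩

section Reachability

variable (f : S → S) (G : Finset S)

lemma reachAux_dirac (m : ℕ) (s : S) :
    reachAux (fun s s' => if s' = f s then 1 else 0) G m s =
      if ∃ k ≤ m, f^[k] s ∈ G then 1 else 0 := by
  induction m generalizing s with
  | zero => simp [reachAux]
  | succ m ih =>
    simp only [reachAux, ite_mul, one_mul, zero_mul, Finset.sum_ite_eq', Finset.mem_univ,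
      if_true, ih]
    by_cases hs : s ∈ G
    · rw [if_pos hs, if_pos ⟨0, m.zero_le.trans m.le_succ, hs⟩]
    · rw [if_neg hs]
      congr 1
      refine propext ⟨fun ⟨k, hk, h⟩ => ⟨k + 1, by omega, h⟩, fun ⟨k, hk, h⟩ => ?_⟩
      cases k with
      | zero => exact absurd h hs
      | succ k => exact ⟨k, by omega, h⟩

lemma one_half_lt_reachProb_dirac_iff (s : S) :
    (1 / 2 : ℝ≥0) < reachProb (fun s s' => if s' = f s then 1 else 0) G s ↔
      ∃ k, f^[k] s ∈ G := by
  have hbdd : BddAbove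
      (Set.range fun m => reachAux (fun s s' => if s' = f s then 1 else 0) G m s) :=
    ⟨1, by rintro _ ⟨m, rfl⟩; dsimp only; rw [reachAux_dirac]; split_ifs <;> simp⟩
  rw [reachProb, lt_ciSup_iff hbdd]
  simp only [reachAux_dirac]
  constructor
  · rintro ⟨m, hm⟩
    split_ifs at hm with h
    · obtain ⟨k, -, hk⟩ := h
      exact ⟨k, hk⟩
    · exact absurd hm (by simp)
  · rintro ⟨k, hk⟩
    exact ⟨k, by rw [if_pos ⟨k, le_rfl, hk⟩]; norm_num⟩

end Reachability

section Reduction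

variable {n j : ℕ} {Tf : Fin j → Finset (Fin n)}

/-- `σ` plays, in the state with the index of `a`, the action `a`: the only one not leading
to `⊥`. -/
def Advances (σ : St n → Ac n) : Prop :=
  ∀ a : Ac n, σ (Fin.castLE (by omega) a) = a

lemma stepSt_of_lt (σ : St n → Ac n) (s : St n) (hs : (s : ℕ) < n + 3) :
    stepSt n σ s = if (σ s : ℕ) = s then ⟨s + 1, by omega⟩ else botSt n :=
  dif_pos hs

lemma iterate_stepSt_initSt_of_advances {σ : St n → Ac n} (hσ : Advances σ) {k : ℕ}
    (hk : k ≤ n + 3) : (stepSt n σ)^[k] (initSt n) = ⟨k, by omega⟩ := by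
  induction k with
  | zero => rfl
  | succ k ih =>
    rw [Function.iterate_succ_apply', ih (by omega), stepSt_of_lt σ _ (by simp; omega), if_pos]
    exact congrArg Fin.val (hσ ⟨k, by omega⟩)

lemma iterate_stepSt_initSt_eq_botSt_or (σ : St n → Ac n) (k : ℕ) :
    (stepSt n σ)^[k] (initSt n) = botSt n ∨
      ∀ a : Ac n, (a : ℕ) < (stepSt n σ)^[k] (initSt n) →
        σ (Fin.castLE (by omega) a) = a := by
  induction k with
  | zero => exact Or.inr fun a ha => absurd ha (Nat.not_lt_zero _)
  | succ k ih =>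
    rw [Function.iterate_succ_apply']
    set x := (stepSt n σ)^[k] (initSt n)
    rcases ih with hx | hx
    · left
      rw [hx, stepSt, dif_neg (by simp [botSt])]
    by_cases hlt : (x : ℕ) < n + 3
    · rw [stepSt_of_lt σ x hlt]
      split_ifs with hσx
      · refine Or.inr fun a ha => ?_
        rcases Nat.lt_succ_iff_lt_or_eq.1 ha with ha | ha
        · exact hx a ha
        · have : Fin.castLE (by omega) a = x := Fin.ext ha
          exact Fin.ext (by rw [this, hσx, ha])
      · exact Or.inl rfl
    · rw [stepSt, dif_neg hlt]
      exact Or.inr hx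

lemma one_half_lt_reachProb_iff_advances (σ : St n → Ac n) :
    (1 / 2 : ℝ≥0) < reachProb (transMat n σ) {goalSt n} (initSt n) ↔ Advances σ := by
  refine (one_half_lt_reachProb_dirac_iff (stepSt n σ) _ _).trans ⟨?_, fun hσ => ?_⟩
  · rintro ⟨k, hk⟩
    rw [Finset.mem_singleton] at hk
    rcases iterate_stepSt_initSt_eq_botSt_or σ k with hbot | hσ
    · exact absurd (hk.symm.trans hbot) (by simp [goalSt, botSt])
    · exact fun a => hσ a (by rw [hk, goalSt]; exact a.isLt)
  · refine ⟨n + 3, ?_⟩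
    rw [iterate_stepSt_initSt_of_advances hσ le_rfl]
    exact Finset.mem_singleton.2 rfl

open Finset

lemma exists_mem_of_valu_inl_ne_zero {s : St n} {i : Fin j}
    (h : valu n j Tf s (.inl i) ≠ 0) :
    ∃ u ∈ Tf i, (u : ℕ) = s := by
  simp only [valu] at h
  split_ifs at h with hs hu
  exacts [⟨_, hu, rfl⟩, absurd rfl h, absurd rfl h]

lemma eq_of_valu_inr_ne_zero {s x : St n} (h : valu n j Tf s (.inr x) ≠ 0) : s = x := by
  simp only [valu] at h
  split_ifs at h with hs
  exacts [hs, absurd rfl h]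

lemma exists_cover_of_advances (t : DT (Fin j ⊕ St n) (Ac n))
    (ht : Advances fun s => t.eval (valu n j Tf s)) :
    ∃ (W : Finset (Ac n)) (I : Finset (Fin j)), #W + #I ≤ t.depth + 1 ∧
      ∀ a : Ac n, a ∈ W ∨ ∃ i ∈ I, ∃ u ∈ Tf i, (u : ℕ) = a := by
  let val (a : Ac n) := valu n j Tf (Fin.castLE (by omega) a)
  obtain ⟨V, Z, hV, hZ, hcov⟩ := t.exists_separating_vars val univ
    fun a _ b _ h => (ht a).symm.trans (h.trans (ht b))
  let E : Finset (Ac n) := {a | .inr (Fin.castLE (by omega) a) ∈ V}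
  have hE : #E ≤ #V.toRight := card_le_card_of_injOn (fun a => Fin.castLE (by omega) a)
    (fun a ha => mem_toRight.2 (mem_filter.1 ha).2) (Fin.castLE_injective (by omega)).injOn
  refine ⟨Z ∪ E, V.toLeft, ?_, fun a => ?_⟩
  · have := card_toLeft_add_card_toRight (u := V)
    calc _ ≤ 1 + #V.toRight + #V.toLeft :=
          Nat.add_le_add_right ((card_union_le _ _).trans (Nat.add_le_add hZ hE)) _
      _ ≤ t.depth + 1 := by omega
  obtain hZ | ⟨v, hv, hne⟩ := hcov a (mem_univ a)
  · exact .inl (mem_union_left _ hZ)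
  rcases v with i | x
  · exact Or.inr ⟨i, mem_toLeft.2 hv, exists_mem_of_valu_inl_ne_zero hne⟩
  · rw [← eq_of_valu_inr_ne_zero hne] at hv
    exact Or.inl (mem_union_right _ (mem_filter.2 ⟨mem_univ _, hv⟩))

lemma isExactCover_of_cover_of_card_le {q : ℕ} (hn : n = 3 * q) (hT : ∀ i, #(Tf i) = 3)
    {W : Finset (Ac n)} {I : Finset (Fin j)} (hcard : #W + #I ≤ q + 3)
    (hcov : ∀ a : Ac n, a ∈ W ∨ ∃ i ∈ I, ∃ u ∈ Tf i, (u : ℕ) = a) :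
    IsExactCover Tf I := by
  classical
  let low : Fin n ↪ Ac n := Fin.castLEEmb (by omega)
  have hunion : univ ⊆ W ∪ (I.biUnion Tf).map low := fun a _ => by
    rcases hcov a with ha | ⟨i, hi, u, hu, hval⟩
    exacts [mem_union_left _ ha,
      mem_union_right _ (mem_map.2 ⟨u, mem_biUnion.2 ⟨i, hi, hu⟩, Fin.ext hval⟩)]
  have hbiUnion := card_biUnion_le_card_mul I Tf 3 fun i _ => (hT i).le
  have hlarge := (card_le_card hunion).trans (card_union_le _ _)
  rw [card_univ, Fintype.card_fin, card_map] at hlarge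
  -- The three states above `n` are not covered by the sets, so they fill up `W`.
  have hhigh : #(univ \ univ.map low) = 3 := by
    rw [card_sdiff_of_subset (subset_univ _), card_univ, card_map, card_univ, Fintype.card_fin,
      Fintype.card_fin]
    omega
  have hW : W = univ \ univ.map low := (eq_of_subset_of_card_le (fun a ha => by
    rcases mem_union.1 (hunion (mem_univ a)) with h | h
    · exact h
    · exact absurd (map_subset_map.2 (subset_univ _) h) (mem_sdiff.1 ha).2) (by omega)).symm
  have hW3 : #W = 3 := hW ▸ hhigh
  refine isExactCover_of_cover (k := 3) (fun i => (hT i).le)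
    (by rw [Fintype.card_fin]; omega) fun u => ?_
  rcases hcov (low u) with hu | ⟨i, hi, u', hu', hval⟩
  · exact absurd (mem_map_of_mem _ (mem_univ u)) (mem_sdiff.1 (hW ▸ hu)).2
  · exact ⟨i, hi, Fin.ext hval ▸ hu'⟩

end Reduction

section Construction

variable (n j : ℕ) (Tf : Fin j → Finset (Fin n))

/-- Plays `a` in the state of each action `a` of the list, testing all but the last. -/
def sepTree : List (Ac n) → DT (Fin j ⊕ St n) (Ac n)
  | [] => .leaf 0
  | [a] => .leaf a
  | a :: b :: l => .node (.inr (Fin.castLE (by omega) a)) 0 (sepTree (b :: l)) (.leaf a)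

def coverTree : List (Fin j) → DT (Fin j ⊕ St n) (Ac n)
  | [] => sepTree n j [⟨n, by omega⟩, ⟨n + 1, by omega⟩, ⟨n + 2, by omega⟩]
  | i :: l => .node (.inl i) 0 (coverTree l)
      (sepTree n j (((Tf i).sort (· ≤ ·)).map (Fin.castLE (by omega))))

variable {n j Tf}

theorem depth_sepTree : ∀ l : List (Ac n), (sepTree n j l).depth = l.length - 1
  | [] | [_] => rfl
  | _ :: b :: l => by simp [sepTree, DT.depth, depth_sepTree (b :: l)]

theorem eval_sepTree : ∀ {l : List (Ac n)} {a : Ac n}, a ∈ l →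
    (sepTree n j l).eval (valu n j Tf (Fin.castLE (by omega) a)) = a
  | [_], _, ha => (List.mem_singleton.1 ha).symm
  | b :: c :: l, a, ha => by
    by_cases hab : a = b
    · simp [sepTree, DT.eval, valu, hab]
    · have hne : Fin.castLE (by omega) a ≠ (Fin.castLE (by omega) b : St n) :=
        fun h => hab (Fin.castLE_injective _ h)
      simp only [sepTree, DT.eval, valu, hne, if_false, le_refl, if_true]
      exact eval_sepTree ((List.mem_cons.1 ha).resolve_left hab)

theorem depth_coverTree (hT : ∀ i, (Tf i).card = 3) :
    ∀ l : List (Fin j), (coverTree n j Tf l).depth ≤ l.length + 2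
  | [] => by simp [coverTree, depth_sepTree]
  | i :: l => by
    have := depth_coverTree hT l
    simp only [coverTree, DT.depth, depth_sepTree, List.length_map, Finset.length_sort, hT,
      List.length_cons]
    omega

theorem eval_coverTree_of_le {a : Ac n} (ha : n ≤ a) :
    ∀ l : List (Fin j), (coverTree n j Tf l).eval (valu n j Tf (Fin.castLE (by omega) a)) = a
  | [] => eval_sepTree (by
      have : (a : ℕ) = n ∨ (a : ℕ) = n + 1 ∨ (a : ℕ) = n + 2 := by omega
      rcases this with h | h | h <;> simp [Fin.ext_iff, h])
  | i :: l => by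
    simp only [coverTree, DT.eval, valu, Fin.val_castLE, dif_neg (not_lt.2 ha), le_refl, if_true]
    exact eval_coverTree_of_le ha l

theorem eval_coverTree_of_lt {a : Ac n} (ha : (a : ℕ) < n) {i₀ : Fin j}
    (hi₀ : ⟨a, ha⟩ ∈ Tf i₀) :
    ∀ {l : List (Fin j)}, i₀ ∈ l → (∀ i ∈ l, ⟨a, ha⟩ ∈ Tf i → i = i₀) →
      (coverTree n j Tf l).eval (valu n j Tf (Fin.castLE (by omega) a)) = a
  | i :: l, hl, huniq => by
    by_cases hi : ⟨a, ha⟩ ∈ Tf i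
    · simp only [coverTree, DT.eval, valu, Fin.val_castLE, dif_pos ha, hi, if_true]
      exact eval_sepTree (List.mem_map.2 ⟨⟨a, ha⟩, (Finset.mem_sort _).2 hi, rfl⟩)
    · have hne : i₀ ≠ i := fun h => hi (h ▸ hi₀)
      simp only [coverTree, DT.eval, valu, Fin.val_castLE, dif_pos ha, hi, if_false, le_refl,
        if_true]
      exact eval_coverTree_of_lt ha hi₀ ((List.mem_cons.1 hl).resolve_left hne)
        fun i' hi' => huniq i' (List.mem_cons_of_mem _ hi')

theorem advances_coverTree {I : Finset (Fin j)} (hI : IsExactCover Tf I) :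
    Advances fun s => (coverTree n j Tf I.toList).eval (valu n j Tf s) := fun a => by
  by_cases ha : (a : ℕ) < n
  · obtain ⟨i₀, ⟨hi₀, hu⟩, huniq⟩ := hI ⟨a, ha⟩
    exact eval_coverTree_of_lt ha hu (Finset.mem_toList.2 hi₀)
      fun i hi hui => huniq i ⟨Finset.mem_toList.1 hi, hui⟩
  · exact eval_coverTree_of_le (not_lt.1 ha) _

end Construction

theorem x3c_reduction_correct_general (n q j : ℕ) (hn : n = 3 * q)
    (Tf : Fin j → Finset (Fin n)) (hT : ∀ i, (Tf i).card = 3) :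
    (∃ t : DT (Fin j ⊕ St n) (Ac n),
      t.depth ≤ n / 3 + 2 ∧
      (1 / 2 : ℝ≥0) <
        reachProb (transMat n (fun s => t.eval (valu n j Tf s)))
          {goalSt n} (initSt n)) ↔
    (∃ I : Finset (Fin j), ∀ u : Fin n, ∃! i, i ∈ I ∧ u ∈ Tf i) := by
  simp only [one_half_lt_reachProb_iff_advances, show n / 3 = q by omega]
  constructor
  · rintro ⟨t, hdepth, ht⟩
    obtain ⟨W, I, hcard, hcov⟩ := exists_cover_of_advances t ht
    exact ⟨I, isExactCover_of_cover_of_card_le hn hT (by omega) hcov⟩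
  · rintro ⟨I, hI⟩
    have hcard := IsExactCover.card_eq hI hT
    rw [Fintype.card_fin] at hcard
    refine ⟨coverTree n j Tf I.toList, ?_, advances_coverTree hI⟩
    calc _ ≤ I.toList.length + 2 := depth_coverTree hT _
      _ = q + 2 := by rw [Finset.length_toList]; omega

/-- For an X3C instance `(U, T)` with `U = {1, …, n}`, `n = 3q`,
`n > 7`, and `T = {T_1, …, T_j}` a collection of 3-element subsets of `U`, in the MDP
constructed from it there is a decision tree of depth at most `n/3 + 2` whose induced
policy reaches the goal state from the initial state with probability greater than
`1/2` iff the X3C instance has an exact cover. -/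
theorem x3c_reduction_correct (n q j : ℕ) (hn : n = 3 * q) (h7 : 7 < n)
    (Tf : Fin j → Finset (Fin n)) (hT : ∀ i, (Tf i).card = 3) :
    (∃ t : DT (Fin j ⊕ St n) (Ac n),
      t.depth ≤ n / 3 + 2 ∧
      (1 / 2 : ℝ≥0) <
        reachProb (transMat n (fun s => t.eval (valu n j Tf s)))
          {goalSt n} (initSt n)) ↔
    (∃ I : Finset (Fin j), ∀ u : Fin n, ∃! i, i ∈ I ∧ u ∈ Tf i) :=
  x3c_reduction_correct_general n q j hn Tf hT

end Paper11
end
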